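/- Let φ, ψ be structural sets in ℝ_{0,m} and f: ℝᵐ → ℝ_{0,m} be C²-smooth. Then φ∂[Ψ₁^{φ,ψ}(f)]ψ∂ = Ψ₁^{φ,ψ}(φ∂[f]ψ∂). In particular, f is (φ,ψ)-inframonogenic if and only if Ψ₁^{φ,ψ}(f) is, provided m is odd. -/

import Mathlib

open CliffordAlgebra

noncomputable section

/-- The quadratic form of `ℝ_{0,m}`: negative definite on `ℝ^m`. -/
abbrev Qf (m : ℕ) : QuadraticForm ℝ (Fin m → ℝ) :=
  QuadraticMap.weightedSumSquares ℝ (fun _ : Fin m => (-1 : ℝ))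

/-- The real Clifford algebra `ℝ_{0,m}`. -/
abbrev Cl (m : ℕ) := CliffordAlgebra (Qf m)

/-- A structural set: an orthonormal basis `ψ¹,…,ψᵐ` of `ℝᵐ`. -/
def IsStructuralSet {m : ℕ} (ψ : Fin m → (Fin m → ℝ)) : Prop :=
  ∀ i j, (∑ t, ψ i t * ψ j t) = if i = j then (1 : ℝ) else 0

/-- The ordered product `ψ_A = ψ^{j₁} ⋯ ψ^{j_k}` for `A = {j₁ < ⋯ < j_k}`. -/
def prodS {m : ℕ} (ψ : Fin m → (Fin m → ℝ)) (A : Finset (Fin m)) : Cl m :=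
  ((A.sort (· ≤ ·)).map (fun i => ι (Qf m) (ψ i))).prod

/-- The operator `Ψ_k^{φ,ψ}(a) = Σ_{|A|=k} φ_A a ψ̂_A`. -/
def PsiK {m : ℕ} (φ ψ : Fin m → (Fin m → ℝ)) (k : ℕ) (a : Cl m) : Cl m :=
  ∑ A ∈ Finset.univ.filter (fun A : Finset (Fin m) => A.card = k),
    prodS φ A * a * reverse (prodS ψ A)

/-- `Ψ₊ = Σ_{k even} Ψ_k`. -/
def PsiPlus {m : ℕ} (φ ψ : Fin m → (Fin m → ℝ)) (a : Cl m) : Cl m :=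
  ∑ k ∈ (Finset.range (m + 1)).filter (fun k => Even k), PsiK φ ψ k a

/-- `Ψ₋ = Σ_{k odd} Ψ_k`. -/
def PsiMinus {m : ℕ} (φ ψ : Fin m → (Fin m → ℝ)) (a : Cl m) : Cl m :=
  ∑ k ∈ (Finset.range (m + 1)).filter (fun k => Odd k), PsiK φ ψ k a

/-- `Ψ₁^{φ,ψ}(a) = Σⱼ φʲ a ψʲ`. -/
def Psi1 {m : ℕ} (φ ψ : Fin m → (Fin m → ℝ)) (a : Cl m) : Cl m :=
  ∑ j, ι (Qf m) (φ j) * a * ι (Qf m) (ψ j)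

/-- The standard basis of `ℝᵐ`. -/
def stdB {m : ℕ} (i : Fin m) : Fin m → ℝ := Pi.single i 1

/-- The basis multivector `e_A`. -/
def eA {m : ℕ} (A : Finset (Fin m)) : Cl m := prodS stdB A

/-- The element with coefficients `c` in the multivector basis. -/
def toCl {m : ℕ} (c : Finset (Fin m) → ℝ) : Cl m := ∑ A, c A • eA A

/-- The space `ℝ_{0,m}^{(k)}` of `k`-grade multivectors. -/
def gradeK (m k : ℕ) : Submodule ℝ (Cl m) :=
  Submodule.span ℝ {x | ∃ A : Finset (Fin m), A.card = k ∧ x = eA A}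

/-- Coefficient functions of `ℝ_{0,m}`-valued maps. -/
abbrev Coef (m : ℕ) := Finset (Fin m) → ℝ

/-- The coefficients of the even part `f₊`. -/
def cEven {m : ℕ} (c : Coef m) : Coef m := fun A => if Even A.card then c A else 0

/-- The coefficients of the odd part `f₋`. -/
def cOdd {m : ℕ} (c : Coef m) : Coef m := fun A => if Odd A.card then c A else 0

/-- The even part of a Clifford number. -/
def evenPart {m : ℕ} (a : Cl m) : Cl m :=
  (DirectSum.decompose (evenOdd (Qf m)) a 0 : evenOdd (Qf m) 0)

/-- The odd part of a Clifford number. -/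
def oddPart {m : ℕ} (a : Cl m) : Cl m :=
  (DirectSum.decompose (evenOdd (Qf m)) a 1 : evenOdd (Qf m) 1)

/-- Partial derivative `∂F/∂xᵢ` of a coefficient function. -/
def pd {m : ℕ} (i : Fin m) (F : (Fin m → ℝ) → Coef m) : (Fin m → ℝ) → Coef m :=
  fun x => fderiv ℝ F x (Pi.single i 1)

/-- The sandwich operator `φ∂[f]ψ∂ = Σᵢⱼ φⁱ (∂²f/∂xᵢ∂xⱼ) ψʲ` for `f = Σ_A F_A e_A`. -/
def sandwichD {m : ℕ} (φ ψ : Fin m → (Fin m → ℝ)) (F : (Fin m → ℝ) → Coef m)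
    (x : Fin m → ℝ) : Cl m :=
  ∑ i, ∑ j, ι (Qf m) (φ i) * toCl (pd i (pd j F) x) * ι (Qf m) (ψ j)

/-- The operator `φ∂[ψ∂[f]] = Σᵢⱼ φⁱ ψʲ ∂²f/∂xᵢ∂xⱼ`. -/
def ddD {m : ℕ} (φ ψ : Fin m → (Fin m → ℝ)) (F : (Fin m → ℝ) → Coef m)
    (x : Fin m → ℝ) : Cl m :=
  ∑ i, ∑ j, ι (Qf m) (φ i) * (ι (Qf m) (ψ j) * toCl (pd i (pd j F) x))

/-- The componentwise Laplacian `Δf = Σᵢ ∂²f/∂xᵢ²`. -/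
def lapD {m : ℕ} (F : (Fin m → ℝ) → Coef m) (x : Fin m → ℝ) : Cl m :=
  ∑ i, toCl (pd i (pd i F) x)

/-!
Write `eᵢ = φⁱ` and `gⱼ = ψʲ`; both families satisfy `eᵢeₖ + eₖeᵢ = -2δᵢₖ`. Moving `eᵢ` and `gⱼ`
through `Ψ₁` costs one such relation each:
`eᵢ Ψ₁(b) gⱼ = Ψ₁(eᵢ b gⱼ) + 2 (eⱼeᵢ b - b gᵢgⱼ)`.
Summed against the symmetric Hessian `∂ᵢ∂ⱼf`, both `Σ eⱼeᵢ ∂ᵢ∂ⱼf` and `Σ ∂ᵢ∂ⱼf gᵢgⱼ` reduce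
to `-Δf`, so the correction terms cancel.

For the equivalence, `Ψ₁ = Σⱼ Wⱼ` with `Wⱼ b = eⱼ b gⱼ`, and the `Wⱼ` are `m` commuting
involutions. Splitting a vector into the `±1`-eigenparts of one `Wⱼ` at a time shows that
`Σⱼ Wⱼ - c` is injective whenever `c + m` is odd; for `m` odd this makes `Ψ₁` injective.
-/

theorem eq_zero_of_sum_smul_eq_zsmul {R M κ : Type*} [Ring R] [AddCommGroup M] [Module R M]
    [IsAddTorsionFree M] {V : κ → R} (hcomm : ∀ j k, Commute (V j) (V k))
    (hsq : ∀ j, V j * V j = 1) (s : Finset κ) {c : ℤ} (hc : Odd (c + s.card)) {y : M}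
    (hy : (∑ j ∈ s, V j) • y = c • y) : y = 0 := by
  classical
  induction s using Finset.induction_on generalizing c y with
  | empty =>
    simp only [Finset.sum_empty, zero_smul, Finset.card_empty, Nat.cast_zero, add_zero] at hy hc
    exact (IsAddTorsionFree.zsmul_eq_zero_iff_right (by rintro rfl; simp at hc)).1 hy.symm
  | insert a s ha ih =>
    rw [Finset.sum_insert ha] at hy
    rw [Finset.card_insert_of_notMem ha] at hc
    set T := ∑ j ∈ s, V j
    have hVV : V a • V a • y = y := by rw [smul_smul, hsq, one_smul]
    have hSV : (V a + T) • V a • y = c • V a • y := by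
      have hcomm' : Commute (V a) (V a + T) :=
        (Commute.refl _).add_right (Commute.sum_right _ _ _ fun j _ => hcomm a j)
      rw [smul_smul, ← hcomm'.eq, mul_smul, hy, smul_comm]
    have eigenpart_eq_zero : ∀ ε : ℤ, ε = 1 ∨ ε = -1 → y + ε • V a • y = 0 := by
      intro ε hε
      have hε2 : ε * ε = 1 := by rcases hε with rfl | rfl <;> rfl
      refine ih (c := c - ε) ?_ ?_
      · obtain ⟨k, hk⟩ := hc
        rcases hε with rfl | rfl
        · exact ⟨k - 1, by push_cast at hk ⊢; omega⟩
        · exact ⟨k, by push_cast at hk ⊢; omega⟩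
      · rw [show T = (V a + T) - V a by abel, sub_smul, smul_add, smul_add, smul_comm _ ε,
          smul_comm _ ε, hy, hSV, hVV]
        generalize V a • y = z
        linear_combination (norm := module) hε2 • z
    have h2 : (2 : ℤ) • y = 0 := by
      have hplus := eigenpart_eq_zero 1 (.inl rfl)
      have hminus := eigenpart_eq_zero (-1) (.inr rfl)
      generalize V a • y = z at hplus hminus
      linear_combination (norm := module) hplus + hminus
    exact (IsAddTorsionFree.zsmul_eq_zero_iff_right two_ne_zero).1 h2

section CliffordFamily

variable {κ A : Type*} [Ring A]

structure IsCliffordFamily (e : κ → A) : Prop where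
  mul_self : ∀ i, e i * e i = -1
  anticomm : ∀ ⦃i j⦄, i ≠ j → e i * e j = -(e j * e i)

lemma IsCliffordFamily.mul_add_mul_swap [DecidableEq κ] {e : κ → A} (he : IsCliffordFamily e)
    (i j : κ) : e i * e j + e j * e i = if i = j then -2 else 0 := by
  by_cases h : i = j
  · subst h
    rw [he.mul_self, if_pos rfl]
    norm_num
  · rw [he.anticomm h, if_neg h, neg_add_cancel]

def sandwichBy (a c : A) : Module.End ℤ A := LinearMap.mulLeft ℤ a * LinearMap.mulRight ℤ c

@[simp]
lemma sandwichBy_apply (a c b : A) : sandwichBy a c b = a * b * c := (mul_assoc a b c).symm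

lemma sandwichBy_mul_sandwichBy (a c a' c' : A) :
    sandwichBy a c * sandwichBy a' c' = sandwichBy (a * a') (c' * c) := by
  ext b
  simp [mul_assoc]

lemma sandwichBy_neg_neg (a c : A) : sandwichBy (-a) (-c) = sandwichBy a c := by
  ext b
  simp

lemma sandwichBy_one_one : sandwichBy (1 : A) 1 = 1 := by
  ext b
  simp

variable [Fintype κ] {e g : κ → A}

def cliffordSandwich (e g : κ → A) : Module.End ℤ A := ∑ k, sandwichBy (e k) (g k)

lemma cliffordSandwich_apply (b : A) : cliffordSandwich e g b = ∑ k, e k * b * g k := by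
  simp [cliffordSandwich]

lemma IsCliffordFamily.mul_cliffordSandwich_add (he : IsCliffordFamily e) (b : A) (i : κ) :
    e i * cliffordSandwich e g b + cliffordSandwich e g (e i * b) = -(2 * (b * g i)) := by
  classical
  simp only [cliffordSandwich_apply, Finset.mul_sum, ← Finset.sum_add_distrib]
  calc ∑ k, (e i * (e k * b * g k) + e k * (e i * b) * g k)
      = ∑ k, (if i = k then -(2 * (b * g k)) else 0) := by
        refine Finset.sum_congr rfl fun k _ => ?_
        simp only [← mul_assoc, ← add_mul, he.mul_add_mul_swap]
        split_ifs <;> simp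
    _ = -(2 * (b * g i)) := by simp

lemma IsCliffordFamily.cliffordSandwich_mul_add (hg : IsCliffordFamily g) (b : A) (j : κ) :
    cliffordSandwich e g b * g j + cliffordSandwich e g (b * g j) = -(2 * (e j * b)) := by
  classical
  simp only [cliffordSandwich_apply, Finset.sum_mul, ← Finset.sum_add_distrib]
  calc ∑ k, (e k * b * g k * g j + e k * (b * g j) * g k)
      = ∑ k, (if k = j then -(2 * (e k * b)) else 0) := by
        refine Finset.sum_congr rfl fun k _ => ?_
        simp only [mul_assoc, ← mul_add, hg.mul_add_mul_swap]
        split_ifs with h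
        · subst h
          noncomm_ring
        · simp
    _ = -(2 * (e j * b)) := by simp

lemma IsCliffordFamily.mul_cliffordSandwich_mul (he : IsCliffordFamily e)
    (hg : IsCliffordFamily g) (b : A) (i j : κ) :
    e i * cliffordSandwich e g b * g j
      = cliffordSandwich e g (e i * b * g j) + 2 * (e j * e i * b - b * (g i * g j)) := by
  rw [eq_sub_of_add_eq (he.mul_cliffordSandwich_add b i), sub_mul,
    eq_sub_of_add_eq (hg.cliffordSandwich_mul_add (e i * b) j)]
  noncomm_ring

lemma IsCliffordFamily.two_mul_sum_sum_mul_mul_left (he : IsCliffordFamily e) {a : κ → κ → A}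
    (ha : ∀ i j, a i j = a j i) : 2 * ∑ i, ∑ j, e j * e i * a i j = -(2 * ∑ i, a i i) := by
  classical
  calc 2 * ∑ i, ∑ j, e j * e i * a i j
      = ∑ i, ∑ j, (e j * e i + e i * e j) * a i j := by
        conv_lhs => rw [two_mul]; enter [2]; rw [Finset.sum_comm]
        simp only [← Finset.sum_add_distrib, add_mul]
        exact Finset.sum_congr rfl fun i _ => Finset.sum_congr rfl fun j _ => by rw [ha j i]
    _ = -(2 * ∑ i, a i i) := by
        simp [he.mul_add_mul_swap, Finset.mul_sum]

lemma IsCliffordFamily.two_mul_sum_sum_mul_mul_right (hg : IsCliffordFamily g) {a : κ → κ → A}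
    (ha : ∀ i j, a i j = a j i) : 2 * ∑ i, ∑ j, a i j * (g i * g j) = -(2 * ∑ i, a i i) := by
  classical
  calc 2 * ∑ i, ∑ j, a i j * (g i * g j)
      = ∑ i, ∑ j, a i j * (g i * g j + g j * g i) := by
        conv_lhs => rw [two_mul]; enter [2]; rw [Finset.sum_comm]
        simp only [← Finset.sum_add_distrib, mul_add]
        exact Finset.sum_congr rfl fun i _ => Finset.sum_congr rfl fun j _ => by rw [ha j i]
    _ = ∑ i, a i i * -2 := by simp [hg.mul_add_mul_swap]
    _ = -(2 * ∑ i, a i i) := by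
        rw [Finset.mul_sum, ← Finset.sum_neg_distrib]
        exact Finset.sum_congr rfl fun i _ => by noncomm_ring

lemma IsCliffordFamily.sum_sum_mul_cliffordSandwich_mul (he : IsCliffordFamily e)
    (hg : IsCliffordFamily g) {a : κ → κ → A} (ha : ∀ i j, a i j = a j i) :
    ∑ i, ∑ j, e i * cliffordSandwich e g (a i j) * g j
      = cliffordSandwich e g (∑ i, ∑ j, e i * a i j * g j) := by
  simp only [he.mul_cliffordSandwich_mul hg, Finset.sum_add_distrib, map_sum, ← Finset.mul_sum,
    Finset.sum_sub_distrib, mul_sub, he.two_mul_sum_sum_mul_mul_left ha,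
    hg.two_mul_sum_sum_mul_mul_right ha, sub_self, add_zero]

lemma IsCliffordFamily.cliffordSandwich_eq_zero_iff [IsAddTorsionFree A]
    (he : IsCliffordFamily e) (hg : IsCliffordFamily g) (hodd : Odd (Fintype.card κ)) {b : A} :
    cliffordSandwich e g b = 0 ↔ b = 0 := by
  refine ⟨fun hb => eq_zero_of_sum_smul_eq_zsmul (V := fun k => sandwichBy (e k) (g k))
    (fun j k => ?_) (fun j => ?_) Finset.univ (c := 0) (by simpa using hodd)
    (by simpa [cliffordSandwich_apply] using hb), fun hb => by rw [hb, map_zero]⟩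
  · by_cases hjk : j = k
    · exact hjk ▸ Commute.refl _
    · change sandwichBy _ _ * sandwichBy _ _ = sandwichBy _ _ * sandwichBy _ _
      rw [sandwichBy_mul_sandwichBy, sandwichBy_mul_sandwichBy, he.anticomm hjk,
        hg.anticomm (Ne.symm hjk), sandwichBy_neg_neg]
  · rw [sandwichBy_mul_sandwichBy, he.mul_self, hg.mul_self, sandwichBy_neg_neg,
      sandwichBy_one_one]

end CliffordFamily

lemma Qf_apply {m : ℕ} (w : Fin m → ℝ) : Qf m w = -∑ t, w t * w t := by
  simp [QuadraticMap.weightedSumSquares_apply]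

lemma polar_Qf {m : ℕ} (u v : Fin m → ℝ) :
    QuadraticMap.polar (Qf m) u v = -2 * ∑ t, u t * v t := by
  simp only [QuadraticMap.polar, Qf_apply, Pi.add_apply, Finset.mul_sum]
  rw [neg_sub_neg, sub_neg_eq_add, ← Finset.sum_sub_distrib, ← Finset.sum_add_distrib]
  exact Finset.sum_congr rfl fun t _ => by ring

lemma IsStructuralSet.isCliffordFamily {m : ℕ} {φ : Fin m → Fin m → ℝ} (hφ : IsStructuralSet φ) :
    IsCliffordFamily fun i => ι (Qf m) (φ i) where
  mul_self i := by rw [ι_sq_scalar, Qf_apply, hφ i i, if_pos rfl, map_neg, map_one]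
  anticomm i j h := eq_neg_of_add_eq_zero_left <| by
    rw [ι_mul_ι_add_swap, polar_Qf, hφ i j, if_neg h, mul_zero, map_zero]

instance {m : ℕ} : IsAddTorsionFree (Cl m) := .of_isTorsionFree ℝ _

lemma Psi1_eq_cliffordSandwich {m : ℕ} (φ ψ : Fin m → Fin m → ℝ) (a : Cl m) :
    Psi1 φ ψ a = cliffordSandwich (fun j => ι (Qf m) (φ j)) (fun j => ι (Qf m) (ψ j)) a :=
  (cliffordSandwich_apply a).symm

lemma pd_pd_comm {m : ℕ} {F : (Fin m → ℝ) → Coef m} (hF : ContDiff ℝ 2 F) (x : Fin m → ℝ)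
    (i j : Fin m) : pd i (pd j F) x = pd j (pd i F) x := by
  have hF' : Differentiable ℝ (fderiv ℝ F) :=
    (hF.fderiv_right (m := 1) (by norm_num)).differentiable one_ne_zero
  have hsymm := (hF.contDiffAt (x := x)).isSymmSndFDerivAt (by simp)
  unfold pd
  rw [fderiv_clm_apply (hF' x) (differentiableAt_const _),
    fderiv_clm_apply (hF' x) (differentiableAt_const _)]
  simpa using hsymm _ _

/-- for C²-smooth `f : ℝᵐ → ℝ_{0,m}`,
`φ∂[Ψ₁^{φ,ψ}(f)]ψ∂ = Ψ₁^{φ,ψ}(φ∂[f]ψ∂)`; in particular, for `m` odd, `f` is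
`(φ,ψ)`-inframonogenic iff `Ψ₁^{φ,ψ}(f)` is. -/
theorem sandwich_psi1 {m : ℕ} (φ ψ : Fin m → (Fin m → ℝ))
    (hφ : IsStructuralSet φ) (hψ : IsStructuralSet ψ)
    (F : (Fin m → ℝ) → Coef m) (hF : ContDiff ℝ 2 F) :
    (∀ x : Fin m → ℝ,
      (∑ i, ∑ j, ι (Qf m) (φ i) * Psi1 φ ψ (toCl (pd i (pd j F) x)) * ι (Qf m) (ψ j))
        = Psi1 φ ψ (sandwichD φ ψ F x)) ∧
    (Odd m →
      ((∀ x : Fin m → ℝ, sandwichD φ ψ F x = 0) ↔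
        (∀ x : Fin m → ℝ,
          (∑ i, ∑ j, ι (Qf m) (φ i) * Psi1 φ ψ (toCl (pd i (pd j F) x)) * ι (Qf m) (ψ j))
            = 0))) := by
  have he := hφ.isCliffordFamily
  have hg := hψ.isCliffordFamily
  have sandwich_Psi1_eq (x : Fin m → ℝ) :
      (∑ i, ∑ j, ι (Qf m) (φ i) * Psi1 φ ψ (toCl (pd i (pd j F) x)) * ι (Qf m) (ψ j))
        = Psi1 φ ψ (sandwichD φ ψ F x) := by
    simp only [Psi1_eq_cliffordSandwich]
    exact he.sum_sum_mul_cliffordSandwich_mul hg fun i j => congrArg toCl (pd_pd_comm hF x i j)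
  refine ⟨sandwich_Psi1_eq, fun hm => ?_⟩
  simp_rw [sandwich_Psi1_eq, Psi1_eq_cliffordSandwich,
    he.cliffordSandwich_eq_zero_iff hg (by simpa using hm)]
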